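/- arXiv:2509.21172 — 5 statements merged into one kernel-verified Lean document; each statement's English description precedes it below -/
import Mathlib

section
/- Let S, A be finite nonempty sets, P a transition kernel, γ ∈ [0,1), and (r,v) a pair satisfying the soft Bellman equation. For any c : S → ℝ, define r̃(s,a) = r(s,a) + c(s) − γ·Σ_{s'} P(s'|s,a) c(s') and ṽ(s,a) = v(s,a) + Σ_{s'} P(s'|s,a) c(s'). Then (r̃, ṽ) also satisfies the soft Bellman equation. -/
theorem shaping_preserves_soft_bellman
    {S A : Type*} [Fintype S] [Fintype A] [Nonempty S] [Nonempty A]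
    (P : S → A → S → ℝ)
    (hP0 : ∀ s a s', 0 ≤ P s a s')
    (hP1 : ∀ s a, ∑ s', P s a s' = 1)
    (γ : ℝ) (hγ0 : 0 ≤ γ) (hγ1 : γ < 1)
    (r v : S → A → ℝ)
    (hBellman : ∀ s a, v s a = ∑ s', P s a s' *
      Real.log (∑ a', Real.exp (r s' a' + γ * v s' a')))
    (c : S → ℝ)
    (rt vt : S → A → ℝ)
    (hrt : ∀ s a, rt s a = r s a + c s - γ * ∑ s', P s a s' * c s')
    (hvt : ∀ s a, vt s a = v s a + ∑ s', P s a s' * c s') :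
    ∀ s a, vt s a = ∑ s', P s a s' *
      Real.log (∑ a', Real.exp (rt s' a' + γ * vt s' a')) := by
  intro s a
  have key : ∀ s' a', rt s' a' + γ * vt s' a' = (r s' a' + γ * v s' a') + c s' := by
    intro s' a'
    rw [hrt, hvt]; ring
  have hlog : ∀ s' : S, Real.log (∑ a', Real.exp (rt s' a' + γ * vt s' a'))
      = c s' + Real.log (∑ a', Real.exp (r s' a' + γ * v s' a')) := by
    intro s'
    have : (∑ a', Real.exp (rt s' a' + γ * vt s' a'))
        = Real.exp (c s') * ∑ a', Real.exp (r s' a' + γ * v s' a') := by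
      rw [Finset.mul_sum]
      refine Finset.sum_congr rfl fun a' _ => ?_
      rw [key, ← Real.exp_add]; ring_nf
    rw [this, Real.log_mul (Real.exp_ne_zero _) (ne_of_gt (Finset.sum_pos
      (fun a' _ => Real.exp_pos _) Finset.univ_nonempty)), Real.log_exp]
  calc vt s a = v s a + ∑ s', P s a s' * c s' := hvt s a
    _ = ∑ s', P s a s' * (c s' + Real.log (∑ a', Real.exp (r s' a' + γ * v s' a'))) := by
        rw [hBellman s a]
        rw [← Finset.sum_add_distrib]
        refine Finset.sum_congr rfl fun s' _ => ?_
        ring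
    _ = _ := Finset.sum_congr rfl fun s' _ => by rw [hlog s']
end

section
/- Let S, A be finite, π(a|s) > 0 a behavior policy, μ a conditional probability on A, P a transition kernel, γ ∈ [0,1). Set u*(s,a) = log π(a|s). Let c* be the unique bounded solution of c − γ P_μ c = −μu*, where (μu*)(s) = Σ_a μ(a|s) u*(s,a) and (P_μ c)(s) = Σ_a μ(a|s) Σ_{s'} P(s'|s,a) c(s'). Define r*(s,a) = u*(s,a) + c*(s) − γ (Pc*)(s,a) and v*(s,a) = (Pc*)(s,a) with (Pc*)(s,a) = Σ_{s'} P(s'|s,a) c*(s'). Then (r*, v*) satisfies the soft Bellman equation and the normalization Σ_a μ(a|s) r*(s,a) = 0 for all s. -/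
theorem normalized_solution_satisfies_bellman_and_normalization
    {S A : Type*} [Fintype S] [Fintype A] [Nonempty S] [Nonempty A]
    (P : S → A → S → ℝ)
    (hP0 : ∀ s a s', 0 ≤ P s a s')
    (hP1 : ∀ s a, ∑ s', P s a s' = 1)
    (μ : S → A → ℝ) (hμ0 : ∀ s a, 0 ≤ μ s a) (hμ1 : ∀ s, ∑ a, μ s a = 1)
    (γ : ℝ) (hγ0 : 0 ≤ γ) (hγ1 : γ < 1)
    (π : S → A → ℝ) (hπpos : ∀ s a, 0 < π s a) (hπ1 : ∀ s, ∑ a, π s a = 1)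
    (ustar : S → A → ℝ) (hustar : ∀ s a, ustar s a = Real.log (π s a))
    (cstar : S → ℝ)
    (hcstar : ∀ s, cstar s - γ * (∑ a, μ s a * ∑ s', P s a s' * cstar s')
        = -(∑ a, μ s a * ustar s a))
    (rstar vstar : S → A → ℝ)
    (hrstar : ∀ s a, rstar s a
      = ustar s a + cstar s - γ * ∑ s', P s a s' * cstar s')
    (hvstar : ∀ s a, vstar s a = ∑ s', P s a s' * cstar s') :
    (∀ s a, vstar s a = ∑ s', P s a s' *
        Real.log (∑ a', Real.exp (rstar s' a' + γ * vstar s' a'))) ∧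
    (∀ s, ∑ a, μ s a * rstar s a = 0) := by
  have key : ∀ s' : S, Real.log (∑ a', Real.exp (rstar s' a' + γ * vstar s' a')) = cstar s' := by
    intro s'
    have h1 : ∀ a', rstar s' a' + γ * vstar s' a' = ustar s' a' + cstar s' := by
      intro a'; rw [hrstar, hvstar]; ring
    have h2 : (∑ a', Real.exp (rstar s' a' + γ * vstar s' a'))
        = Real.exp (cstar s') := by
      rw [Finset.sum_congr rfl fun a' _ => by
        rw [h1 a', hustar, Real.exp_add, Real.exp_log (hπpos s' a')]]
      rw [← Finset.sum_mul, hπ1, one_mul]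
    rw [h2, Real.log_exp]
  constructor
  · intro s a
    rw [hvstar]
    exact Finset.sum_congr rfl fun s' _ => by rw [key s']
  · intro s
    have h3 : ∑ a, μ s a * rstar s a
        = (∑ a, μ s a * ustar s a) + cstar s
          - γ * ∑ a, μ s a * ∑ s', P s a s' * cstar s' := by
      simp only [hrstar]
      rw [Finset.sum_congr rfl fun a _ => (by ring :
        μ s a * (ustar s a + cstar s - γ * ∑ s', P s a s' * cstar s')
        = μ s a * ustar s a + μ s a * cstar s - γ * (μ s a * ∑ s', P s a s' * cstar s'))]
      rw [Finset.sum_sub_distrib, Finset.sum_add_distrib, ← Finset.sum_mul, hμ1,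
        ← Finset.mul_sum]
      ring
    have := hcstar s
    rw [h3]; linarith
end

section
/- Let S, A be finite, P a transition kernel, γ ∈ [0,1), and π₁ a policy. For rewards r and r' = r + c − γPc related by a potential c : S → ℝ, the policy Q-functions Q_r^{π₁} and Q_{r'}^{π₁}, defined as the unique solutions of Q = r + γ π₁PQ and Q' = r' + γ π₁PQ' respectively (where (π₁PQ)(s,a) = Σ_{s'} P(s'|s,a) Σ_{a'} π₁(a'|s') Q(s',a')), satisfy Q_{r'}^{π₁}(s,a) = Q_r^{π₁}(s,a) + c(s) for all s,a. -/
theorem shaped_Q_function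
    {S A : Type*} [Fintype S] [Fintype A] [Nonempty S] [Nonempty A]
    (P : S → A → S → ℝ)
    (hP0 : ∀ s a s', 0 ≤ P s a s')
    (hP1 : ∀ s a, ∑ s', P s a s' = 1)
    (γ : ℝ) (hγ0 : 0 ≤ γ) (hγ1 : γ < 1)
    (pol : S → A → ℝ) (hpol0 : ∀ s a, 0 ≤ pol s a) (hpol1 : ∀ s, ∑ a, pol s a = 1)
    (c : S → ℝ)
    (r r' : S → A → ℝ)
    (hr' : ∀ s a, r' s a = r s a + c s - γ * ∑ s', P s a s' * c s')
    (Q Q' : S → A → ℝ)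
    (hQ : ∀ s a, Q s a
      = r s a + γ * ∑ s', P s a s' * ∑ a', pol s' a' * Q s' a')
    (hQ' : ∀ s a, Q' s a
      = r' s a + γ * ∑ s', P s a s' * ∑ a', pol s' a' * Q' s' a') :
    ∀ s a, Q' s a = Q s a + c s := by
  set D : S → A → ℝ := fun s a => Q' s a - Q s a - c s with hD
  -- D satisfies D = γ π P D
  have hDrec : ∀ s a, D s a = γ * ∑ s', P s a s' * ∑ a', pol s' a' * D s' a' := by
    intro s a
    have key : ∀ s', ∑ a', pol s' a' * D s' a'
        = (∑ a', pol s' a' * Q' s' a') - (∑ a', pol s' a' * Q s' a') - c s' := by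
      intro s'
      have : ∑ a', pol s' a' * D s' a'
          = ∑ a', (pol s' a' * Q' s' a' - pol s' a' * Q s' a' - pol s' a' * c s') := by
        apply Finset.sum_congr rfl; intro a' _; simp [hD]; ring
      rw [this, Finset.sum_sub_distrib, Finset.sum_sub_distrib, ← Finset.sum_mul,
        hpol1, one_mul]
    simp only [hD, hQ s a, hQ' s a, hr' s a]
    have : ∑ s', P s a s' * ∑ a', pol s' a' * D s' a'
        = (∑ s', P s a s' * ∑ a', pol s' a' * Q' s' a')
          - (∑ s', P s a s' * ∑ a', pol s' a' * Q s' a')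
          - ∑ s', P s a s' * c s' := by
      rw [← Finset.sum_sub_distrib, ← Finset.sum_sub_distrib]
      apply Finset.sum_congr rfl; intro s' _; rw [key s']; ring
    rw [this]; ring
  -- bound: |D s a| ≤ γ * M where M is the max of |D|
  obtain ⟨⟨s₀, a₀⟩, _, hmax⟩ := Finset.exists_max_image (Finset.univ : Finset (S × A))
    (fun p => |D p.1 p.2|) ⟨(Classical.arbitrary S, Classical.arbitrary A), Finset.mem_univ _⟩
  set M := |D s₀ a₀| with hM
  have hMnn : 0 ≤ M := abs_nonneg _
  have hbound : M ≤ γ * M := by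
    calc M = |γ * ∑ s', P s₀ a₀ s' * ∑ a', pol s' a' * D s' a'| := by rw [hM, hDrec]
    _ = γ * |∑ s', P s₀ a₀ s' * ∑ a', pol s' a' * D s' a'| := by
        rw [abs_mul, abs_of_nonneg hγ0]
    _ ≤ γ * ∑ s', P s₀ a₀ s' * M := by
        apply mul_le_mul_of_nonneg_left _ hγ0
        calc |∑ s', P s₀ a₀ s' * ∑ a', pol s' a' * D s' a'|
            ≤ ∑ s', |P s₀ a₀ s' * ∑ a', pol s' a' * D s' a'| := Finset.abs_sum_le_sum_abs _ _
          _ ≤ ∑ s', P s₀ a₀ s' * M := by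
              apply Finset.sum_le_sum; intro s' _
              rw [abs_mul, abs_of_nonneg (hP0 _ _ _)]
              apply mul_le_mul_of_nonneg_left _ (hP0 _ _ _)
              calc |∑ a', pol s' a' * D s' a'| ≤ ∑ a', |pol s' a' * D s' a'| :=
                    Finset.abs_sum_le_sum_abs _ _
                _ ≤ ∑ a', pol s' a' * M := by
                    apply Finset.sum_le_sum; intro a' _
                    rw [abs_mul, abs_of_nonneg (hpol0 _ _)]
                    exact mul_le_mul_of_nonneg_left
                      (hmax (s', a') (Finset.mem_univ _)) (hpol0 _ _)
                _ = M := by rw [← Finset.sum_mul, hpol1, one_mul]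
    _ = γ * M := by rw [← Finset.sum_mul, hP1, one_mul]
  have hM0 : M = 0 := by nlinarith
  intro s a
  have : |D s a| ≤ 0 := hM0 ▸ hmax (s, a) (Finset.mem_univ _)
  have : D s a = 0 := abs_nonpos_iff.mp this
  simp only [hD] at this
  linarith
end

section
/- Let S, A be finite, P a transition kernel, γ ∈ [0,1), and c : S → ℝ. For rewards r and r' = r + c − γPc and any two policies π₁, π₂, the value functions V_r^{π} = π Q_r^{π} satisfy V_{r'}^{π₁}(s) − V_{r'}^{π₂}(s) = V_r^{π₁}(s) − V_r^{π₂}(s) for all s. That is, policy value differences are invariant to potential-based reward shaping. -/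
lemma fix_zero
    {S A : Type*} [Fintype S] [Fintype A] [Nonempty S] [Nonempty A]
    (P : S → A → S → ℝ)
    (hP0 : ∀ s a s', 0 ≤ P s a s')
    (hP1 : ∀ s a, ∑ s', P s a s' = 1)
    (γ : ℝ) (hγ0 : 0 ≤ γ) (hγ1 : γ < 1)
    (pol : S → A → ℝ)
    (hpol0 : ∀ s a, 0 ≤ pol s a) (hpol1 : ∀ s, ∑ a, pol s a = 1)
    (g : S → A → ℝ)
    (hg : ∀ s a, g s a = γ * ∑ s', P s a s' * ∑ a', pol s' a' * g s' a') :
    ∀ s a, g s a = 0 := by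
  obtain ⟨⟨s₀, a₀⟩, hm⟩ := Finite.exists_max (fun p : S × A => |g p.1 p.2|)
  set M := |g s₀ a₀| with hM
  have hM0 : 0 ≤ M := abs_nonneg _
  have hbound : ∀ s a, |g s a| ≤ M := fun s a => hm (s, a)
  have hinner : ∀ s', |∑ a', pol s' a' * g s' a'| ≤ M := by
    intro s'
    calc |∑ a', pol s' a' * g s' a'| ≤ ∑ a', |pol s' a' * g s' a'| :=
          Finset.abs_sum_le_sum_abs _ _
      _ ≤ ∑ a', pol s' a' * M := by
          apply Finset.sum_le_sum
          intro a' _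
          rw [abs_mul, abs_of_nonneg (hpol0 s' a')]
          exact mul_le_mul_of_nonneg_left (hbound s' a') (hpol0 s' a')
      _ = M := by rw [← Finset.sum_mul, hpol1 s', one_mul]
  have key : M ≤ γ * M := by
    have h1 : |g s₀ a₀| ≤ γ * M := by
      rw [hg s₀ a₀, abs_mul, abs_of_nonneg hγ0]
      apply mul_le_mul_of_nonneg_left _ hγ0
      calc |∑ s', P s₀ a₀ s' * ∑ a', pol s' a' * g s' a'|
          ≤ ∑ s', |P s₀ a₀ s' * ∑ a', pol s' a' * g s' a'| :=
            Finset.abs_sum_le_sum_abs _ _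
        _ ≤ ∑ s', P s₀ a₀ s' * M := by
            apply Finset.sum_le_sum
            intro s' _
            rw [abs_mul, abs_of_nonneg (hP0 s₀ a₀ s')]
            exact mul_le_mul_of_nonneg_left (hinner s') (hP0 s₀ a₀ s')
        _ = M := by rw [← Finset.sum_mul, hP1 s₀ a₀, one_mul]
    exact hM ▸ h1
  have hMz : M = 0 := by nlinarith
  intro s a
  have := hbound s a
  rw [hMz] at this
  exact abs_eq_zero.mp (le_antisymm this (abs_nonneg _))

theorem value_differences_shaping_invariant
    {S A : Type*} [Fintype S] [Fintype A] [Nonempty S] [Nonempty A]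
    (P : S → A → S → ℝ)
    (hP0 : ∀ s a s', 0 ≤ P s a s')
    (hP1 : ∀ s a, ∑ s', P s a s' = 1)
    (γ : ℝ) (hγ0 : 0 ≤ γ) (hγ1 : γ < 1)
    (pol1 pol2 : S → A → ℝ)
    (hpol10 : ∀ s a, 0 ≤ pol1 s a) (hpol11 : ∀ s, ∑ a, pol1 s a = 1)
    (hpol20 : ∀ s a, 0 ≤ pol2 s a) (hpol21 : ∀ s, ∑ a, pol2 s a = 1)
    (c : S → ℝ)
    (r r' : S → A → ℝ)
    (hr' : ∀ s a, r' s a = r s a + c s - γ * ∑ s', P s a s' * c s')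
    (Q1 Q2 Q1' Q2' : S → A → ℝ)
    (hQ1 : ∀ s a, Q1 s a
      = r s a + γ * ∑ s', P s a s' * ∑ a', pol1 s' a' * Q1 s' a')
    (hQ2 : ∀ s a, Q2 s a
      = r s a + γ * ∑ s', P s a s' * ∑ a', pol2 s' a' * Q2 s' a')
    (hQ1' : ∀ s a, Q1' s a
      = r' s a + γ * ∑ s', P s a s' * ∑ a', pol1 s' a' * Q1' s' a')
    (hQ2' : ∀ s a, Q2' s a
      = r' s a + γ * ∑ s', P s a s' * ∑ a', pol2 s' a' * Q2' s' a') :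
    ∀ s, (∑ a, pol1 s a * Q1' s a) - (∑ a, pol2 s a * Q2' s a)
      = (∑ a, pol1 s a * Q1 s a) - (∑ a, pol2 s a * Q2 s a) := by
  have main : ∀ (pol : S → A → ℝ), (∀ s a, 0 ≤ pol s a) → (∀ s, ∑ a, pol s a = 1) →
      ∀ (Q Q' : S → A → ℝ),
      (∀ s a, Q s a = r s a + γ * ∑ s', P s a s' * ∑ a', pol s' a' * Q s' a') →
      (∀ s a, Q' s a = r' s a + γ * ∑ s', P s a s' * ∑ a', pol s' a' * Q' s' a') →
      ∀ s a, Q' s a = Q s a + c s := by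
    intro pol hp0 hp1 Q Q' hQ hQ'
    set g : S → A → ℝ := fun s a => Q' s a - Q s a - c s with hgdef
    have hg : ∀ s a, g s a = γ * ∑ s', P s a s' * ∑ a', pol s' a' * g s' a' := by
      intro s a
      have expand : ∀ s', ∑ a', pol s' a' * g s' a'
          = (∑ a', pol s' a' * Q' s' a') - (∑ a', pol s' a' * Q s' a') - c s' := by
        intro s'
        have h : ∀ a', pol s' a' * g s' a'
            = pol s' a' * Q' s' a' - pol s' a' * Q s' a' - pol s' a' * c s' := by
          intro a'; simp only [hgdef]; ring
        rw [Finset.sum_congr rfl (fun a' _ => h a'), Finset.sum_sub_distrib,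
          Finset.sum_sub_distrib, ← Finset.sum_mul, hp1 s', one_mul]
      simp only [hgdef]
      rw [hQ' s a, hQ s a, hr' s a,
        show (∑ s', P s a s' * ∑ a', pol s' a' * g s' a')
            = ∑ s', (P s a s' * ∑ a', pol s' a' * Q' s' a'
              - P s a s' * ∑ a', pol s' a' * Q s' a' - P s a s' * c s') from
          Finset.sum_congr rfl fun s' _ => by rw [expand s']; ring,
        Finset.sum_sub_distrib, Finset.sum_sub_distrib]
      ring
    have hz := fix_zero P hP0 hP1 γ hγ0 hγ1 pol hp0 hp1 g hg
    intro s a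
    have := hz s a
    simp only [hgdef] at this
    linarith
  intro s
  have h1 := main pol1 hpol10 hpol11 Q1 Q1' hQ1 hQ1'
  have h2 := main pol2 hpol20 hpol21 Q2 Q2' hQ2 hQ2'
  have e1 : ∑ a, pol1 s a * Q1' s a = (∑ a, pol1 s a * Q1 s a) + c s := by
    rw [show (∑ a, pol1 s a * Q1' s a) = ∑ a, (pol1 s a * Q1 s a + pol1 s a * c s) from
      Finset.sum_congr rfl fun a _ => by rw [h1 s a]; ring]
    rw [Finset.sum_add_distrib, ← Finset.sum_mul, hpol11 s, one_mul]
  have e2 : ∑ a, pol2 s a * Q2' s a = (∑ a, pol2 s a * Q2 s a) + c s := by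
    rw [show (∑ a, pol2 s a * Q2' s a) = ∑ a, (pol2 s a * Q2 s a + pol2 s a * c s) from
      Finset.sum_congr rfl fun a _ => by rw [h2 s a]; ring]
    rw [Finset.sum_add_distrib, ← Finset.sum_mul, hpol21 s, one_mul]
  rw [e1, e2]; ring
end

section
/- Let p, q be probability mass functions on a finite set A with p(a), q(a) > 0 for all a, and suppose |log(q(a)/p(a))| ≤ L for all a. Then Σ_a p(a) (log q(a) − log p(a))² ≤ 2 e^{4L} · KL(p‖q). -/
/-!
Writing `u = log (q a / p a)`, the summand of `KL(p‖q)` is `p a * (e^u - 1 - u)` up to `q a - p a`,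
whose sum vanishes. Taylor's theorem with Lagrange remainder gives `e^u - 1 - u ≥ e^{-|u|} u² / 2`,
so each summand on the left is at most `2 e^L` times the corresponding summand of `KL(p‖q)`.
-/

open Real Set Finset

theorem exists_mem_uIoo_exp_sub_one_sub_eq {u : ℝ} (hu : u ≠ 0) :
    ∃ ξ ∈ uIoo 0 u, exp u - 1 - u = exp ξ * u ^ 2 / 2 := by
  obtain ⟨ξ, hξ, h⟩ := taylor_mean_remainder_lagrange_iteratedDeriv (f := exp) (n := 1) hu.symm
    contDiff_exp.contDiffOn
  have hderiv : derivWithin exp (uIcc 0 u) 0 = 1 := by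
    rw [(hasDerivAt_exp 0).hasDerivWithinAt.derivWithin
      (uniqueDiffOn_uIcc hu.symm 0 left_mem_uIcc), exp_zero]
  norm_num [taylorWithinEval_succ, taylor_within_zero_eval, iteratedDerivWithin_one, hderiv,
    iteratedDeriv_eq_iterate, iter_deriv_exp] at h
  exact ⟨ξ, hξ, by linear_combination h⟩

theorem exp_neg_abs_mul_sq_div_two_le_exp_sub_one_sub (u : ℝ) :
    exp (-|u|) * u ^ 2 / 2 ≤ exp u - 1 - u := by
  rcases eq_or_ne u 0 with rfl | hu
  · simp
  obtain ⟨ξ, hξ, hTaylor⟩ := exists_mem_uIoo_exp_sub_one_sub_eq hu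
  have hξu : -|u| ≤ ξ := by
    rcases le_total 0 u with h | h
    · simp only [uIoo_of_le h, Set.mem_Ioo] at hξ; linarith [abs_nonneg u]
    · simp only [uIoo_of_ge h, Set.mem_Ioo] at hξ; linarith [neg_abs_le u]
  rw [hTaylor]
  gcongr

theorem sq_le_two_mul_exp_mul_exp_sub_one_sub {u L : ℝ} (h : |u| ≤ L) :
    u ^ 2 ≤ 2 * exp L * (exp u - 1 - u) := by
  have hexp : 1 ≤ exp L * exp (-|u|) := by
    rw [← exp_add]; exact one_le_exp (by linarith)
  calc u ^ 2 ≤ exp L * exp (-|u|) * u ^ 2 := le_mul_of_one_le_left (sq_nonneg u) hexp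
    _ = 2 * exp L * (exp (-|u|) * u ^ 2 / 2) := by ring
    _ ≤ 2 * exp L * (exp u - 1 - u) := by
      gcongr; exact exp_neg_abs_mul_sq_div_two_le_exp_sub_one_sub u

theorem mul_sq_log_sub_log_le {x y L : ℝ} (hx : 0 < x) (hy : 0 < y) (h : |log (y / x)| ≤ L) :
    x * (log y - log x) ^ 2 ≤ 2 * exp L * (y - x + x * log (x / y)) := by
  have hu := sq_le_two_mul_exp_mul_exp_sub_one_sub h
  rw [exp_log (div_pos hy hx), log_div hy.ne' hx.ne'] at hu
  rw [log_div hx.ne' hy.ne']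
  calc x * (log y - log x) ^ 2 ≤ x * (2 * exp L * (y / x - 1 - (log y - log x))) := by gcongr
    _ = 2 * exp L * (y - x + x * (log x - log y)) := by field_simp; ring

theorem sq_log_ratio_le_kl_general
    {A : Type*} [Fintype A]
    (L : ℝ)
    (p q : A → ℝ)
    (hp0 : ∀ a, 0 < p a) (hp1 : ∑ a, p a = 1)
    (hq0 : ∀ a, 0 < q a) (hq1 : ∑ a, q a = 1)
    (hratio : ∀ a, |Real.log (q a / p a)| ≤ L) :
    ∑ a, p a * (Real.log (q a) - Real.log (p a)) ^ 2
      ≤ 2 * Real.exp (4 * L) * ∑ a, p a * Real.log (p a / q a) := by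
  have hratio_four (a : A) : |log (q a / p a)| ≤ 4 * L := by
    linarith [hratio a, (abs_nonneg _).trans (hratio a)]
  calc ∑ a, p a * (log (q a) - log (p a)) ^ 2
      ≤ ∑ a, 2 * exp (4 * L) * (q a - p a + p a * log (p a / q a)) :=
        sum_le_sum fun a _ => mul_sq_log_sub_log_le (hp0 a) (hq0 a) (hratio_four a)
    _ = 2 * exp (4 * L) * ∑ a, p a * log (p a / q a) := by
        rw [← mul_sum, sum_add_distrib, sum_sub_distrib, hp1, hq1, sub_self, zero_add]

theorem sq_log_ratio_le_kl
    {A : Type*} [Fintype A] [Nonempty A]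
    (L : ℝ) (hL : 0 ≤ L)
    (p q : A → ℝ)
    (hp0 : ∀ a, 0 < p a) (hp1 : ∑ a, p a = 1)
    (hq0 : ∀ a, 0 < q a) (hq1 : ∑ a, q a = 1)
    (hratio : ∀ a, |Real.log (q a / p a)| ≤ L) :
    ∑ a, p a * (Real.log (q a) - Real.log (p a)) ^ 2
      ≤ 2 * Real.exp (4 * L) * ∑ a, p a * Real.log (p a / q a) :=
  sq_log_ratio_le_kl_general L p q hp0 hp1 hq0 hq1 hratio
end
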